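/- arXiv:0804.4873 — 2 statements merged into one kernel-verified Lean document; each statement's English description precedes it below -/
import Mathlib

section
/- Let Ω = {(x,y) ∈ ℝ² : 0 < x < 1, 0 < |y| < x^{1/α}} with 0 < α ≤ 1 and let d(x,y) denote the distance from (x,y) to ∂Ω. Then for every β > −1 the integral ∫_Ω d(x,y)^β dx dy is finite. -/
/-!
Around `(x, y) ∈ Ω`, the sup-norm ball of radius `m / (1 + 1/α)`, with
`m = min (|y|, x^{1/α} - |y|, 1 - x)`, stays inside `Ω`, because `t ↦ t^{1/α}` is
`1/α`-Lipschitz on `[0, 1]` when `α ≤ 1`. So for `β < 0` the integrand is dominated by a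
multiple of `|y|^β + (x^{1/α} - |y|)^β + (1 - x)^β`, whose integral over the vertical section
`|y| < x^{1/α}` is at most `4/(β+1) + 2(1 - x)^β`, and Fubini applies. For `β ≥ 0` the
integrand is continuous and `Ω` is bounded.
-/

open MeasureTheory

/-- The planar cuspidal domain `Ω = {(x,y) : 0 < x < 1, 0 < |y| < x^{1/α}}`. -/
def cuspDomain (α : ℝ) : Set (ℝ × ℝ) :=
  {q : ℝ × ℝ | 0 < q.1 ∧ q.1 < 1 ∧ 0 < |q.2| ∧ |q.2| < q.1 ^ (1 / α)}

open Set Metric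

theorem Real.rpow_sub_rpow_le_mul_sub {p x y : ℝ} (hp : 1 ≤ p) (hx : 0 ≤ x) (hxy : x ≤ y)
    (hy : y ≤ 1) : y ^ p - x ^ p ≤ p * (y - x) := by
  refine (convex_Icc (0 : ℝ) 1).image_sub_le_mul_sub_of_deriv_le
    (Real.differentiable_rpow_const hp).continuous.continuousOn
    (Real.differentiable_rpow_const hp).differentiableOn ?_
    x ⟨hx, hxy.trans hy⟩ y ⟨hx.trans hxy, hy⟩ hxy
  intro z hz
  rw [interior_Icc] at hz
  rw [Real.deriv_rpow_const]
  calc p * z ^ (p - 1) ≤ p * 1 := by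
        gcongr
        exact Real.rpow_le_one hz.1.le hz.2.le (by linarith)
    _ = p := mul_one p

theorem le_infDist_frontier_of_ball_subset {X : Type*} [PseudoMetricSpace X]
    [PreconnectedSpace X] {s : Set X} (hs : s ≠ univ) {x : X} {r : ℝ} (hr : ball x r ⊆ s) :
    r ≤ infDist x (frontier s) := by
  rcases le_or_gt r 0 with hr0 | hr0
  · exact hr0.trans infDist_nonneg
  have hfr : (frontier s).Nonempty := nonempty_frontier_iff.2 ⟨⟨x, hr (mem_ball_self hr0)⟩, hs⟩
  refine (le_infDist hfr).2 fun z hz => not_lt.1 fun hzx => hz.2 ?_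
  exact interior_maximal hr isOpen_ball (mem_ball'.2 hzx)

theorem Real.min_rpow_le_rpow_add_rpow {a b : ℝ} (ha : 0 ≤ a) (hb : 0 ≤ b) (β : ℝ) :
    min a b ^ β ≤ a ^ β + b ^ β := by
  rcases min_choice a b with h | h <;> rw [h] <;>
    linarith [Real.rpow_nonneg ha β, Real.rpow_nonneg hb β]

theorem integrableOn_regionBetween_of_integral_norm_le {α E : Type*} [MeasurableSpace α]
    [NormedAddCommGroup E] {μ : Measure α} [SFinite μ] {f g : α → ℝ} {s : Set α}
    (hf : Measurable f) (hg : Measurable g) (hs : MeasurableSet s) {F : α × ℝ → E}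
    (hF : AEStronglyMeasurable F (μ.prod volume)) {C : α → ℝ} (hC : IntegrableOn C s μ)
    (hsection : ∀ x ∈ s, IntegrableOn (fun y => F (x, y)) (Ioo (f x) (g x)))
    (hle : ∀ x ∈ s, ∫ y in Ioo (f x) (g x), ‖F (x, y)‖ ≤ C x) :
    IntegrableOn F (regionBetween f g s) (μ.prod volume) := by
  have hR := measurableSet_regionBetween hf hg hs
  have hslice : ∀ x y, (regionBetween f g s).indicator F (x, y) =
      s.indicator (fun x => (Ioo (f x) (g x)).indicator fun y => F (x, y)) x y := by
    intro x y
    by_cases hx : x ∈ s <;> simp [regionBetween, indicator, hx]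
  rw [← integrable_indicator_iff hR]
  refine (integrable_prod_iff (hF.indicator hR)).2 ⟨ae_of_all _ fun x => ?_, ?_⟩
  · simp only [hslice]
    by_cases hx : x ∈ s
    · simpa [hx, integrable_indicator_iff measurableSet_Ioo] using hsection x hx
    · simp [hx]
  refine Integrable.mono' ((integrable_indicator_iff hs).2 hC)
    (hF.indicator hR).norm.integral_prod_right' (ae_of_all _ fun x => ?_)
  rw [Real.norm_of_nonneg (integral_nonneg fun _ => norm_nonneg _)]
  simp only [hslice]
  by_cases hx : x ∈ s
  · simpa [hx, norm_indicator_eq_indicator_norm, integral_indicator measurableSet_Ioo]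
      using hle x hx
  · simp [hx]

theorem IntervalIntegrable.comp_abs {g : ℝ → ℝ} {b : ℝ} (hb : 0 ≤ b)
    (hg : IntervalIntegrable g volume 0 b) :
    IntervalIntegrable (fun y => g |y|) volume (-b) b := by
  have h0 : IntervalIntegrable (fun y => g |y|) volume 0 b :=
    (intervalIntegrable_congr fun y hy => by
      rw [uIoc_of_le hb] at hy
      simp [abs_of_pos hy.1]).2 hg
  have h1 := ((IntervalIntegrable.iff_comp_neg).1 h0).symm
  simp only [abs_neg, neg_zero] at h1
  exact h1.trans h0

theorem intervalIntegral.integral_comp_abs {g : ℝ → ℝ} {b : ℝ} (hb : 0 ≤ b)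
    (hg : IntervalIntegrable g volume 0 b) :
    ∫ y in -b..b, g |y| = 2 * ∫ y in 0..b, g y := by
  have hpos : ∫ y in 0..b, g |y| = ∫ y in 0..b, g y :=
    integral_congr fun y hy => by
      rw [uIcc_of_le hb] at hy
      simp [abs_of_nonneg hy.1]
  have hneg : ∫ y in -b..0, g |y| = ∫ y in 0..b, g |y| := by
    simpa using (integral_comp_neg (a := 0) (b := b) fun y => g |y|).symm
  have hint := hg.comp_abs hb
  rw [← integral_add_adjacent_intervals (b := 0) (hint.mono_set ?_) (hint.mono_set ?_),
    hneg, hpos, two_mul]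
  all_goals
    rw [uIcc_of_le (by linarith), uIcc_of_le (by linarith)]
    exact Icc_subset_Icc (by linarith) (by linarith)

section

variable {b β : ℝ}

theorem intervalIntegrable_sub_rpow (hβ : -1 < β) :
    IntervalIntegrable (fun t => (b - t) ^ β) volume 0 b := by
  simpa using
    ((intervalIntegral.intervalIntegrable_rpow' (a := 0) (b := b) hβ).comp_sub_left b).symm

theorem intervalIntegrable_rpow_add_sub_rpow_add (hβ : -1 < β) (c : ℝ) :
    IntervalIntegrable (fun t => t ^ β + (b - t) ^ β + c) volume 0 b :=
  ((intervalIntegral.intervalIntegrable_rpow' hβ).add (intervalIntegrable_sub_rpow hβ)).add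
    intervalIntegrable_const

theorem integral_rpow_le_one_div (hβ : -1 < β) (hb₀ : 0 ≤ b) (hb₁ : b ≤ 1) :
    ∫ t in 0..b, t ^ β ≤ 1 / (β + 1) := by
  have hβ' : 0 < β + 1 := by linarith
  rw [integral_rpow (Or.inl hβ), Real.zero_rpow hβ'.ne', sub_zero]
  exact div_le_div_of_nonneg_right (Real.rpow_le_one hb₀ hb₁ hβ'.le) hβ'.le

theorem integral_rpow_add_sub_rpow_add_le (hβ : -1 < β) (hb₀ : 0 ≤ b) (hb₁ : b ≤ 1) {c : ℝ}
    (hc : 0 ≤ c) : ∫ t in 0..b, (t ^ β + (b - t) ^ β + c) ≤ 2 / (β + 1) + c := by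
  have hpow := intervalIntegral.intervalIntegrable_rpow' (a := 0) (b := b) hβ
  have hsymm : ∫ t in 0..b, (b - t) ^ β = ∫ t in 0..b, t ^ β := by
    simp [intervalIntegral.integral_comp_sub_left (fun t => t ^ β) b]
  rw [intervalIntegral.integral_add (hpow.add (intervalIntegrable_sub_rpow hβ))
      intervalIntegrable_const, intervalIntegral.integral_add hpow
      (intervalIntegrable_sub_rpow hβ), hsymm, intervalIntegral.integral_const, smul_eq_mul,
      sub_zero]
  have hpow_le := integral_rpow_le_one_div hβ hb₀ hb₁
  have hbc : b * c ≤ c := mul_le_of_le_one_left hc hb₁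
  have htwo : 2 / (β + 1) = 1 / (β + 1) + 1 / (β + 1) := by ring
  linarith

end

section Cusp

variable {α β : ℝ}

theorem measurableSet_cuspDomain (α : ℝ) : MeasurableSet (cuspDomain α) := by
  unfold cuspDomain
  measurability

theorem cuspDomain_ne_univ (α : ℝ) : cuspDomain α ≠ univ :=
  fun h => (lt_irrefl (0 : ℝ)) (h ▸ mem_univ ((0 : ℝ), (0 : ℝ))).1

theorem cuspDomain_subset_Icc_prod (hα : 0 ≤ α) :
    cuspDomain α ⊆ Icc 0 1 ×ˢ Icc (-1) 1 := by
  rintro ⟨x, y⟩ ⟨hx0, hx1, -, hyx⟩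
  have hy := abs_le.1 (hyx.le.trans (Real.rpow_le_one hx0.le hx1.le (by positivity)))
  exact ⟨⟨hx0.le, hx1.le⟩, hy⟩

theorem cuspDomain_subset_regionBetween (α : ℝ) :
    cuspDomain α ⊆ regionBetween (fun x => -x ^ (1 / α)) (fun x => x ^ (1 / α)) (Ioo 0 1) :=
  fun _ hq => ⟨⟨hq.1, hq.2.1⟩, abs_lt.1 hq.2.2.2⟩

noncomputable def cuspScale (α : ℝ) (q : ℝ × ℝ) : ℝ :=
  min (min |q.2| (q.1 ^ (1 / α) - |q.2|)) (1 - q.1)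

theorem cuspScale_pos {q : ℝ × ℝ} (hq : q ∈ cuspDomain α) : 0 < cuspScale α q :=
  lt_min (lt_min hq.2.2.1 (sub_pos.2 hq.2.2.2)) (sub_pos.2 hq.2.1)

theorem ball_cuspScale_subset (hα : 0 < α) (hα1 : α ≤ 1) {q : ℝ × ℝ} (hq : q ∈ cuspDomain α) :
    ball q (cuspScale α q / (1 + 1 / α)) ⊆ cuspDomain α := by
  obtain ⟨x, y⟩ := q
  have hm : 0 < cuspScale α (x, y) := cuspScale_pos hq
  obtain ⟨hx0, hx1, hy0, hyx⟩ := hq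
  dsimp only at hx0 hx1 hy0 hyx
  set p := 1 / α
  set m := cuspScale α (x, y)
  have hp : 1 ≤ p := by rw [le_div_iff₀ hα]; linarith
  have hm_y : m ≤ |y| := (min_le_left _ _).trans (min_le_left _ _)
  have hm_xy : m ≤ x ^ p - |y| := (min_le_left _ _).trans (min_le_right _ _)
  have hm_x : m ≤ 1 - x := min_le_right _ _
  have hxp : x ^ p ≤ x := Real.rpow_le_self_of_le_one hx0.le hx1.le hp
  set r := m / (1 + p)
  have hmr : m = r + p * r := by simp only [r]; field_simp
  have hr : 0 < r := by positivity
  have hpr : r ≤ p * r := le_mul_of_one_le_left hr.le hp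
  rintro ⟨u, v⟩ huv
  rw [mem_ball, Prod.dist_eq, max_lt_iff, Real.dist_eq, Real.dist_eq] at huv
  obtain ⟨hu, hv⟩ := huv
  have hu' := abs_lt.1 hu
  have hv' : |y| - r < |v| ∧ |v| < |y| + r := by
    constructor <;>
      linarith [abs_sub_abs_le_abs_sub y v, abs_sub_abs_le_abs_sub v y, abs_sub_comm v y]
  have hup : x ^ p - p * r ≤ u ^ p := by
    have hlip := Real.rpow_sub_rpow_le_mul_sub hp (x := x - r) (by linarith) (sub_le_self x hr.le)
      hx1.le
    have hmono := Real.rpow_le_rpow (z := p) (by linarith) (by linarith : x - r ≤ u) (by linarith)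
    linarith
  exact ⟨by linarith, by linarith, by linarith, by linarith⟩

noncomputable def cuspWeight (α β : ℝ) (q : ℝ × ℝ) : ℝ :=
  |q.2| ^ β + (q.1 ^ (1 / α) - |q.2|) ^ β + (1 - q.1) ^ β

theorem cuspScale_rpow_le_cuspWeight {q : ℝ × ℝ} (hq : q ∈ cuspDomain α) (β : ℝ) :
    cuspScale α q ^ β ≤ cuspWeight α β q := by
  obtain ⟨-, hx1, -, hyx⟩ := hq
  calc cuspScale α q ^ β
      ≤ min |q.2| (q.1 ^ (1 / α) - |q.2|) ^ β + (1 - q.1) ^ β :=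
        Real.min_rpow_le_rpow_add_rpow (le_min (abs_nonneg _) (by linarith)) (by linarith) β
    _ ≤ cuspWeight α β q :=
        add_le_add_left (Real.min_rpow_le_rpow_add_rpow (abs_nonneg q.2) (sub_nonneg.2 hyx.le) β) _

theorem infDist_frontier_cuspDomain_rpow_le (hα : 0 < α) (hα1 : α ≤ 1) (hβ : β ≤ 0)
    {q : ℝ × ℝ} (hq : q ∈ cuspDomain α) :
    infDist q (frontier (cuspDomain α)) ^ β ≤ (1 + 1 / α) ^ (-β) * cuspWeight α β q := by
  have hc : 0 < 1 + 1 / α := by positivity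
  have hm := cuspScale_pos hq
  calc infDist q (frontier (cuspDomain α)) ^ β
      ≤ (cuspScale α q / (1 + 1 / α)) ^ β :=
        Real.rpow_le_rpow_of_nonpos (by positivity) (le_infDist_frontier_of_ball_subset
          (cuspDomain_ne_univ α) (ball_cuspScale_subset hα hα1 hq)) hβ
    _ = (1 + 1 / α) ^ (-β) * cuspScale α q ^ β := by
        rw [Real.div_rpow hm.le hc.le, Real.rpow_neg hc.le, div_eq_inv_mul]
    _ ≤ (1 + 1 / α) ^ (-β) * cuspWeight α β q := by
        gcongr
        exact cuspScale_rpow_le_cuspWeight hq β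

theorem integrableOn_cuspWeight_section (hβ : -1 < β) {x : ℝ} (hx : 0 ≤ x) :
    IntegrableOn (fun y => cuspWeight α β (x, y)) (Ioo (-x ^ (1 / α)) (x ^ (1 / α))) := by
  have hb : 0 ≤ x ^ (1 / α) := Real.rpow_nonneg hx _
  rw [← intervalIntegrable_iff_integrableOn_Ioo_of_le (by linarith)]
  exact (intervalIntegrable_rpow_add_sub_rpow_add hβ ((1 - x) ^ β)).comp_abs hb

theorem integral_norm_cuspWeight_section_le (hα : 0 ≤ α) (hβ : -1 < β) {x : ℝ}
    (hx : x ∈ Ioo (0 : ℝ) 1) :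
    ∫ y in Ioo (-x ^ (1 / α)) (x ^ (1 / α)), ‖cuspWeight α β (x, y)‖ ≤
      2 * (2 / (β + 1) + (1 - x) ^ β) := by
  set b := x ^ (1 / α)
  have hb₀ : 0 ≤ b := Real.rpow_nonneg hx.1.le _
  have hb₁ : b ≤ 1 := Real.rpow_le_one hx.1.le hx.2.le (by positivity)
  have hc : 0 ≤ (1 - x) ^ β := Real.rpow_nonneg (sub_nonneg.2 hx.2.le) β
  have hnorm : EqOn (fun y => ‖cuspWeight α β (x, y)‖) (fun y => cuspWeight α β (x, y))
      (Ioo (-b) b) := fun y hy => Real.norm_of_nonneg <| by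
    have : |y| < b := abs_lt.2 hy
    unfold cuspWeight
    positivity
  rw [setIntegral_congr_fun measurableSet_Ioo hnorm, ← integral_Ioc_eq_integral_Ioo,
    ← intervalIntegral.integral_of_le (by linarith)]
  change ∫ y in -b..b, (fun t => t ^ β + (b - t) ^ β + (1 - x) ^ β) |y| ≤ _
  rw [intervalIntegral.integral_comp_abs hb₀ (intervalIntegrable_rpow_add_sub_rpow_add hβ _)]
  exact mul_le_mul_of_nonneg_left (integral_rpow_add_sub_rpow_add_le hβ hb₀ hb₁ hc) two_pos.le

theorem integrableOn_cuspWeight (hα : 0 ≤ α) (hβ : -1 < β) :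
    IntegrableOn (cuspWeight α β) (cuspDomain α) := by
  have hC : IntegrableOn (fun x : ℝ => 2 * (2 / (β + 1) + (1 - x) ^ β)) (Ioo 0 1) := by
    have h := (intervalIntegrable_sub_rpow (b := 1) hβ)
    rw [intervalIntegrable_iff_integrableOn_Ioo_of_le zero_le_one] at h
    exact ((integrableOn_const (by simp)).add h).const_mul 2
  rw [Measure.volume_eq_prod]
  refine (integrableOn_regionBetween_of_integral_norm_le (by fun_prop) (by fun_prop)
    measurableSet_Ioo (by unfold cuspWeight; fun_prop) hC
    (fun _ hx => integrableOn_cuspWeight_section hβ hx.1.le)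
    (fun _ hx => integral_norm_cuspWeight_section_le hα hβ hx)).mono_set
    (cuspDomain_subset_regionBetween α)

end Cusp

/-- On the cusp domain `Ω` with `0 < α ≤ 1`, for every `β > −1` the power `d^β` of the
distance to the boundary is integrable over `Ω`. -/
theorem integrable_dist_rpow_cusp (α : ℝ) (hα : 0 < α) (hα1 : α ≤ 1)
    (β : ℝ) (hβ : -1 < β) :
    IntegrableOn
      (fun q : ℝ × ℝ => Metric.infDist q (frontier (cuspDomain α)) ^ β)
      (cuspDomain α) volume := by
  rcases le_or_gt 0 β with hβ0 | hβ0
  · exact ((continuous_infDist_pt _).rpow_const fun _ => Or.inr hβ0).continuousOn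
      |>.integrableOn_compact (isCompact_Icc.prod isCompact_Icc)
      |>.mono_set (cuspDomain_subset_Icc_prod hα.le)
  refine ((integrableOn_cuspWeight hα.le hβ).const_mul ((1 + 1 / α) ^ (-β))).mono'
    ((continuous_infDist_pt _).measurable.pow_const β).aestronglyMeasurable ?_
  filter_upwards [ae_restrict_mem (measurableSet_cuspDomain α)] with q hq
  rw [Real.norm_of_nonneg (Real.rpow_nonneg infDist_nonneg β)]
  exact infDist_frontier_cuspDomain_rpow_le hα hα1 hβ0.le hq
end

section
/- Let F ⊂ ℝⁿ be compact and nonempty, and consider a Whitney decomposition of ℝⁿ \ F into dyadic cubes Q with ℓ(Q) ≤ d(Q, F) ≤ 4ℓ(Q), where ℓ(Q) denotes the diameter of Q. If F is an m-set (i.e., C⁻¹rᵐ < H^m(B(x,r) ∩ F) < Crᵐ for all x ∈ F and 0 < r ≤ diam F), then for every x₀ ∈ F and 0 < R < diam(F)/3, the number of Whitney cubes of generation k (edge length 2^{−k}) contained in B(x₀, R) is at most C' Rᵐ 2^{km}, with C' depending only on F and n. -/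
/-!
Write `ℓ = 2^{-k}`. A Whitney cube `Q ⊆ B(x₀, R)` satisfies `ℓ ≤ diam Q ≤ dist(Q, F) < R`, and
`dist(Q, F) ≤ 4 diam Q` yields a point `y_Q ∈ F` within `(5√n + 1)ℓ` of the corner of `Q` and
within `4R` of `x₀`. A Vitali subfamily of the points `y_Q` with pairwise disjoint `ℓ`-balls is
`2ℓ`-dense among all of them, and only boundedly many lattice cubes have their `y_Q` near a given
point; so the count is at most a constant times the size of the subfamily. The disjoint sets
`B(y, ℓ) ∩ F` each have `H^m`-measure at least `C⁻¹ ℓ^m` (lower m-set bound) and lie in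
`B(x₀, 5R) ∩ F`, whose measure is `O(R^m)` by the upper bound, extended beyond `diam F` by
`H^m(F) < ∞`.
-/

open MeasureTheory

/-- `F` is an m-set with constant `C`: `C⁻¹ rᵐ < H^m(B(x,r) ∩ F) < C rᵐ` for every
`x ∈ F` and `0 < r ≤ diam F`. -/
def IsMSet {n : ℕ} (m : ℝ) (C : ℝ) (F : Set (EuclideanSpace ℝ (Fin n))) : Prop :=
  0 < C ∧ ∀ x ∈ F, ∀ r : ℝ, 0 < r → r ≤ Metric.diam F →
    ENNReal.ofReal (C⁻¹ * r ^ m) < μH[m] (Metric.ball x r ∩ F) ∧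
    μH[m] (Metric.ball x r ∩ F) < ENNReal.ofReal (C * r ^ m)

/-- The closed dyadic cube of generation `k` (edge length `2^{−k}`) with lower corner
`2^{−k}·a`. -/
def dyadicCube {n : ℕ} (k : ℤ) (a : Fin n → ℤ) : Set (EuclideanSpace ℝ (Fin n)) :=
  {x | ∀ i, (a i : ℝ) * (2 : ℝ) ^ (-k) ≤ x i ∧ x i ≤ ((a i : ℝ) + 1) * (2 : ℝ) ^ (-k)}

/-- Distance between two sets. -/
noncomputable def setDist {X : Type*} [PseudoMetricSpace X] (A B : Set X) : ℝ :=
  sInf {d | ∃ a ∈ A, ∃ b ∈ B, d = dist a b}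

/-- A dyadic cube `Q` is a Whitney cube for `F` if `ℓ(Q) ≤ dist(Q,F) ≤ 4ℓ(Q)`, where
`ℓ(Q)` is the diameter of `Q`. -/
def IsWhitneyCube {n : ℕ} (F Q : Set (EuclideanSpace ℝ (Fin n))) : Prop :=
  Metric.diam Q ≤ setDist Q F ∧ setDist Q F ≤ 4 * Metric.diam Q


open Metric

section Euclidean

variable {ι : Type*} [Fintype ι]

lemma abs_sub_apply_le_dist (x y : EuclideanSpace ℝ ι) (i : ι) : |x i - y i| ≤ dist x y :=
  PiLp.dist_apply_le x y i

lemma dist_le_sqrt_card_mul_of_forall_abs_sub_le {x y : EuclideanSpace ℝ ι} {c : ℝ} (hc : 0 ≤ c)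
    (h : ∀ i, |x i - y i| ≤ c) : dist x y ≤ √(Fintype.card ι) * c := by
  rw [EuclideanSpace.dist_eq, ← Real.sqrt_sq hc, ← Real.sqrt_mul (Nat.cast_nonneg _)]
  gcongr
  calc ∑ i, dist (x i) (y i) ^ 2 ≤ ∑ _i : ι, c ^ 2 := by
        gcongr with i
        exact (Real.dist_eq _ _).trans_le (h i)
    _ = Fintype.card ι * c ^ 2 := by simp

end Euclidean

lemma Finset.card_le_of_forall_abs_sub_le {ι : Type*} [Fintype ι] [DecidableEq ι]
    (s : Finset (ι → ℤ)) (N : ℕ) (h : ∀ a ∈ s, ∀ b ∈ s, ∀ i, |a i - b i| ≤ N) :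
    s.card ≤ (2 * N + 1) ^ Fintype.card ι := by
  obtain rfl | ⟨b, hb⟩ := s.eq_empty_or_nonempty
  · simp
  have hsub : s ⊆ Finset.Icc (b - fun _ => (N : ℤ)) (b + fun _ => (N : ℤ)) := by
    intro a ha
    have hab := fun i => abs_sub_le_iff.1 (h a ha b hb i)
    simp only [Finset.mem_Icc, Pi.le_def, Pi.sub_apply, Pi.add_apply]
    exact ⟨fun i => by linarith [hab i], fun i => by linarith [hab i]⟩
  refine (Finset.card_le_card hsub).trans_eq ?_
  rw [Pi.card_Icc, Finset.prod_eq_pow_card (b := 2 * N + 1)]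
  · rfl
  intro i _
  simp only [Pi.sub_apply, Pi.add_apply, Int.card_Icc]
  omega

section DyadicCube

variable {n : ℕ} (k : ℤ) (a : Fin n → ℤ)

noncomputable def dyadicCorner : EuclideanSpace ℝ (Fin n) :=
  WithLp.toLp 2 fun i => (a i : ℝ) * (2 : ℝ) ^ (-k)

@[simp]
lemma dyadicCorner_apply (i : Fin n) : dyadicCorner k a i = (a i : ℝ) * (2 : ℝ) ^ (-k) := rfl

lemma dyadicCorner_mem_dyadicCube : dyadicCorner k a ∈ dyadicCube k a := fun i => by
  simp only [dyadicCorner_apply]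
  constructor <;> nlinarith [zpow_pos (two_pos (α := ℝ)) (-k)]

variable {k a}

lemma abs_sub_apply_le_of_mem_dyadicCube {x y : EuclideanSpace ℝ (Fin n)}
    (hx : x ∈ dyadicCube k a) (hy : y ∈ dyadicCube k a) (i : Fin n) :
    |x i - y i| ≤ (2 : ℝ) ^ (-k) := by
  obtain ⟨hx₁, hx₂⟩ := hx i
  obtain ⟨hy₁, hy₂⟩ := hy i
  rw [abs_le]
  constructor <;> nlinarith

variable (k a)

lemma diam_dyadicCube_le : diam (dyadicCube k a) ≤ √n * (2 : ℝ) ^ (-k) :=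
  diam_le_of_forall_dist_le (by positivity) fun _ hx _ hy => by
    simpa using dist_le_sqrt_card_mul_of_forall_abs_sub_le (by positivity)
      (abs_sub_apply_le_of_mem_dyadicCube hx hy)

lemma isBounded_dyadicCube : Bornology.IsBounded (dyadicCube k a) :=
  isBounded_iff.2 ⟨√n * (2 : ℝ) ^ (-k), fun _ hx _ hy => by
    simpa using dist_le_sqrt_card_mul_of_forall_abs_sub_le (by positivity)
      (abs_sub_apply_le_of_mem_dyadicCube hx hy)⟩

lemma two_zpow_neg_le_diam_dyadicCube (hn : n ≠ 0) :
    (2 : ℝ) ^ (-k) ≤ diam (dyadicCube k a) := by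
  let i₀ : Fin n := ⟨0, Nat.pos_of_ne_zero hn⟩
  have hmem : dyadicCorner k (a + Pi.single i₀ 1) ∈ dyadicCube k a := fun i => by
    rcases eq_or_ne i i₀ with rfl | hi
    · simp only [dyadicCorner_apply, Pi.add_apply, Pi.single_eq_same]
      push_cast
      constructor <;> nlinarith [zpow_pos (two_pos (α := ℝ)) (-k)]
    · simpa [hi] using dyadicCorner_mem_dyadicCube k a i
  calc (2 : ℝ) ^ (-k) = |dyadicCorner k (a + Pi.single i₀ 1) i₀ - dyadicCorner k a i₀| := by
        simp only [dyadicCorner_apply, Pi.add_apply, Pi.single_eq_same]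
        push_cast
        rw [add_mul, one_mul, add_sub_cancel_left, abs_of_pos (by positivity)]
    _ ≤ diam (dyadicCube k a) :=
        (abs_sub_apply_le_dist _ _ i₀).trans <|
          dist_le_diam_of_mem (isBounded_dyadicCube k a) hmem (dyadicCorner_mem_dyadicCube k a)

lemma card_le_of_forall_dist_dyadicCorner_le (s : Finset (Fin n → ℤ)) (N : ℕ)
    (h : ∀ a ∈ s, ∀ b ∈ s, dist (dyadicCorner k a) (dyadicCorner k b) ≤ N * (2 : ℝ) ^ (-k)) :
    s.card ≤ (2 * N + 1) ^ n := by
  have hℓ : (0 : ℝ) < 2 ^ (-k) := by positivity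
  simpa using s.card_le_of_forall_abs_sub_le N fun a ha b hb i => by
    have hab := (abs_sub_apply_le_dist _ _ i).trans (h a ha b hb)
    rw [dyadicCorner_apply, dyadicCorner_apply, ← sub_mul, abs_mul, abs_of_pos hℓ] at hab
    have hab' : ((|a i - b i| : ℤ) : ℝ) ≤ N := by
      push_cast
      exact le_of_mul_le_mul_right hab hℓ
    exact_mod_cast hab'

end DyadicCube

section SetDist

variable {X : Type*} [PseudoMetricSpace X] {A B : Set X}

lemma setDist_le_dist {a b : X} (ha : a ∈ A) (hb : b ∈ B) : setDist A B ≤ dist a b := by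
  refine csInf_le ⟨0, ?_⟩ ⟨a, ha, b, hb, rfl⟩
  rintro _ ⟨_, _, _, _, rfl⟩
  exact dist_nonneg

lemma exists_dist_lt_setDist_add (hA : A.Nonempty) (hB : B.Nonempty) {ε : ℝ} (hε : 0 < ε) :
    ∃ a ∈ A, ∃ b ∈ B, dist a b < setDist A B + ε := by
  obtain ⟨a₀, ha₀⟩ := hA
  obtain ⟨b₀, hb₀⟩ := hB
  obtain ⟨_, ⟨a, ha, b, hb, rfl⟩, hlt⟩ :=
    exists_lt_of_csInf_lt (s := {d | ∃ a ∈ A, ∃ b ∈ B, d = dist a b}) ⟨_, a₀, ha₀, b₀, hb₀, rfl⟩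
      (lt_add_of_pos_right (setDist A B) hε)
  exact ⟨a, ha, b, hb, hlt⟩

end SetDist

section WhitneyCube

variable {n : ℕ} {F : Set (EuclideanSpace ℝ (Fin n))} {k : ℤ} {a : Fin n → ℤ}
  {x₀ : EuclideanSpace ℝ (Fin n)} {R : ℝ}

lemma setDist_dyadicCube_lt (hsub : dyadicCube k a ⊆ ball x₀ R) (hx₀ : x₀ ∈ F) :
    setDist (dyadicCube k a) F < R :=
  (setDist_le_dist (dyadicCorner_mem_dyadicCube k a) hx₀).trans_lt
    (hsub (dyadicCorner_mem_dyadicCube k a))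

lemma IsWhitneyCube.two_zpow_neg_lt (hW : IsWhitneyCube F (dyadicCube k a)) (hn : n ≠ 0)
    (hsub : dyadicCube k a ⊆ ball x₀ R) (hx₀ : x₀ ∈ F) : (2 : ℝ) ^ (-k) < R :=
  ((two_zpow_neg_le_diam_dyadicCube k a hn).trans hW.1).trans_lt (setDist_dyadicCube_lt hsub hx₀)

lemma IsWhitneyCube.exists_mem_near_dyadicCorner (hW : IsWhitneyCube F (dyadicCube k a))
    (hn : n ≠ 0) (hsub : dyadicCube k a ⊆ ball x₀ R) (hx₀ : x₀ ∈ F) :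
    ∃ y ∈ F, dist (dyadicCorner k a) y ≤ (5 * √n + 1) * (2 : ℝ) ^ (-k) ∧ dist y x₀ < 4 * R := by
  set ℓ : ℝ := 2 ^ (-k)
  obtain ⟨q, hq, y, hy, hqy⟩ := exists_dist_lt_setDist_add ⟨_, dyadicCorner_mem_dyadicCube k a⟩
    ⟨x₀, hx₀⟩ (by positivity : (0 : ℝ) < ℓ)
  have hcq := dist_le_diam_of_mem (isBounded_dyadicCube k a) (dyadicCorner_mem_dyadicCube k a) hq
  have hcy :
      dist (dyadicCorner k a) y < diam (dyadicCube k a) + setDist (dyadicCube k a) F + ℓ := by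
    linarith [dist_triangle (dyadicCorner k a) q y]
  refine ⟨y, hy, ?_, ?_⟩
  · nlinarith [hW.2, diam_dyadicCube_le k a]
  · have hcx₀ : dist (dyadicCorner k a) x₀ < R := hsub (dyadicCorner_mem_dyadicCube k a)
    linarith [dist_triangle_left y x₀ (dyadicCorner k a), hW.1, setDist_dyadicCube_lt hsub hx₀,
      hW.two_zpow_neg_lt hn hsub hx₀]

end WhitneyCube

section MSet

variable {n : ℕ} {m C : ℝ} {F : Set (EuclideanSpace ℝ (Fin n))}

lemma IsMSet.hausdorffMeasure_ne_top (hF : IsMSet m C F) (hFc : IsCompact F)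
    (hd : 0 < diam F) : μH[m] F ≠ ⊤ := by
  obtain ⟨t, ht⟩ :=
    hFc.elim_finite_subcover (fun x : F => ball (x : EuclideanSpace ℝ (Fin n)) (diam F))
    (fun _ => isOpen_ball) fun y hy => Set.mem_iUnion.2 ⟨⟨y, hy⟩, mem_ball_self hd⟩
  have hcover : F ⊆ ⋃ x ∈ t, ball x.1 (diam F) ∩ F := fun y hy => by
    obtain ⟨x, hx, hyx⟩ := Set.mem_iUnion₂.1 (ht hy)
    exact Set.mem_iUnion₂.2 ⟨x, hx, hyx, hy⟩
  refine ne_top_of_le_ne_top (ENNReal.sum_lt_top.2 fun x _ => ?_).ne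
    ((measure_mono hcover).trans (measure_biUnion_finset_le t _))
  exact (hF.2 x x.2 _ hd le_rfl).2.trans ENNReal.ofReal_lt_top

lemma IsMSet.exists_hausdorffMeasure_ball_inter_le (hF : IsMSet m C F) (hFc : IsCompact F)
    (hm : 0 ≤ m) (hd : 0 < diam F) :
    ∃ A > 0, ∀ x ∈ F, ∀ r > 0, μH[m] (ball x r ∩ F) ≤ ENNReal.ofReal (A * r ^ m) := by
  set M := (μH[m] F).toReal
  refine ⟨max C (M / diam F ^ m), lt_max_of_lt_left hF.1, fun x hx r hr => ?_⟩
  rcases le_or_gt r (diam F) with hrd | hdr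
  · refine (hF.2 x hx r hr hrd).2.le.trans (ENNReal.ofReal_le_ofReal ?_)
    gcongr
    exact le_max_left _ _
  · calc μH[m] (ball x r ∩ F) ≤ μH[m] F := measure_mono Set.inter_subset_right
      _ = ENNReal.ofReal (M / diam F ^ m * diam F ^ m) := by
        rw [div_mul_cancel₀ _ (by positivity),
          ENNReal.ofReal_toReal (hF.hausdorffMeasure_ne_top hFc hd)]
      _ ≤ ENNReal.ofReal (max C (M / diam F ^ m) * r ^ m) := by
        gcongr
        exact le_max_right _ _

end MSet

lemma exists_pairwiseDisjoint_closedBall_subfamily {X ι : Type*} [PseudoMetricSpace X]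
    (s : Finset ι) (y : ι → X) {ρ : ℝ} (hρ : 0 ≤ ρ) :
    ∃ u ⊆ s, (u : Set ι).PairwiseDisjoint (fun b => closedBall (y b) ρ) ∧
      ∀ a ∈ s, ∃ b ∈ u, dist (y a) (y b) ≤ 2 * ρ := by
  obtain ⟨u, hus, hdisj, hcover⟩ := Vitali.exists_disjoint_subfamily_covering_enlargement
    (fun b => closedBall (y b) ρ) s (fun _ => ρ) 2 one_lt_two (fun _ _ => hρ) ρ (fun _ _ => le_rfl)
    fun a _ => nonempty_closedBall.2 hρ
  have hu : u.Finite := s.finite_toSet.subset hus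
  refine ⟨hu.toFinset, by simpa using hus, by simpa using hdisj, fun a ha => ?_⟩
  obtain ⟨b, hb, ⟨z, hza, hzb⟩, -⟩ := hcover a ha
  refine ⟨b, hu.mem_toFinset.2 hb, ?_⟩
  linarith [dist_triangle_right (y a) (y b) z, mem_closedBall'.1 hza, mem_closedBall'.1 hzb]

lemma Finset.card_mul_le_measure_of_pairwiseDisjoint {X ι : Type*} [MeasurableSpace X]
    (μ : Measure X) (t : Finset ι) {g : ι → Set X} (hd : (t : Set ι).PairwiseDisjoint g)
    (hg : ∀ b ∈ t, MeasurableSet (g b)) {c : ENNReal} (hc : ∀ b ∈ t, c ≤ μ (g b)) {U : Set X}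
    (hU : ∀ b ∈ t, g b ⊆ U) : t.card * c ≤ μ U :=
  calc t.card * c ≤ ∑ b ∈ t, μ (g b) := by simpa using t.card_nsmul_le_sum _ c hc
    _ = μ (⋃ b ∈ t, g b) := (measure_biUnion_finset hd hg).symm
    _ ≤ μ U := measure_mono (Set.iUnion₂_subset hU)

lemma card_le_mul_card_of_dist_dyadicCorner_le {n : ℕ} {k : ℤ} (s u : Finset (Fin n → ℤ))
    (y : (Fin n → ℤ) → EuclideanSpace ℝ (Fin n)) {D : ℝ}
    (hy : ∀ a ∈ s, dist (dyadicCorner k a) (y a) ≤ D * (2 : ℝ) ^ (-k))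
    (hu : ∀ a ∈ s, ∃ b ∈ u, dist (y a) (y b) ≤ 2 * (2 : ℝ) ^ (-k)) :
    s.card ≤ (2 * ⌈2 * D + 4⌉₊ + 1) ^ n * u.card := by
  choose! f hfu hf using hu
  refine Finset.card_le_mul_card_image_of_maps_to hfu _ fun b _ =>
    card_le_of_forall_dist_dyadicCorner_le k _ _ fun a ha a' ha' => ?_
  obtain ⟨has, rfl⟩ := Finset.mem_filter.1 ha
  obtain ⟨has', hfa'⟩ := Finset.mem_filter.1 ha'
  have hya' := hf a' has'
  rw [hfa'] at hya'
  calc dist (dyadicCorner k a) (dyadicCorner k a')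
      ≤ dist (dyadicCorner k a) (y a) + dist (y a) (y (f a)) + dist (y a') (y (f a))
          + dist (dyadicCorner k a') (y a') := by
        linarith [dist_triangle4 (dyadicCorner k a) (y a) (y a') (dyadicCorner k a'),
          dist_triangle_right (y a) (y a') (y (f a)), dist_comm (dyadicCorner k a') (y a')]
    _ ≤ (2 * D + 4) * (2 : ℝ) ^ (-k) := by linarith [hy a has, hy a' has', hf a has]
    _ ≤ ⌈2 * D + 4⌉₊ * (2 : ℝ) ^ (-k) := by gcongr; exact Nat.le_ceil _

/-- The bound of `card_le_mul_card_of_dist_dyadicCorner_le` for `D = 5√n + 1`, the distance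
(in units of `2^{-k}`) from a Whitney cube's corner to its chosen point of `F`. -/
noncomputable def whitneyMultiplicity (n : ℕ) : ℕ :=
  (2 * ⌈2 * (5 * √n + 1) + 4⌉₊ + 1) ^ n

theorem card_mul_le_hausdorffMeasure_of_isWhitneyCube {n : ℕ} {m C : ℝ}
    {F : Set (EuclideanSpace ℝ (Fin n))} (hF : IsMSet m C F) (hFc : IsClosed F) (hn : n ≠ 0)
    {x₀ : EuclideanSpace ℝ (Fin n)} (hx₀ : x₀ ∈ F) {R : ℝ} (hR : R < diam F / 3) (k : ℤ)
    (s : Finset (Fin n → ℤ))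
    (hs : ∀ a ∈ s, dyadicCube k a ⊆ ball x₀ R ∧ IsWhitneyCube F (dyadicCube k a)) :
    (s.card : ENNReal) * ENNReal.ofReal (C⁻¹ * ((2 : ℝ) ^ (-k)) ^ m) ≤
      (whitneyMultiplicity n : ENNReal) * μH[m] (ball x₀ (5 * R) ∩ F) := by
  set ℓ : ℝ := 2 ^ (-k)
  have hℓ : 0 < ℓ := by positivity
  choose! y hyF hy using fun a ha => (hs a ha).2.exists_mem_near_dyadicCorner hn (hs a ha).1 hx₀
  obtain ⟨u, hus, hdisj, hcover⟩ := exists_pairwiseDisjoint_closedBall_subfamily s y hℓ.le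
  have hcount := card_le_mul_card_of_dist_dyadicCorner_le s u y (fun a ha => (hy a ha).1) hcover
  have hpack : (u.card : ENNReal) * ENNReal.ofReal (C⁻¹ * ℓ ^ m) ≤
      μH[m] (ball x₀ (5 * R) ∩ F) := by
    refine u.card_mul_le_measure_of_pairwiseDisjoint μH[m] (g := fun b => ball (y b) ℓ ∩ F)
      (hdisj.mono fun b => Set.inter_subset_left.trans ball_subset_closedBall)
      (fun b _ => measurableSet_ball.inter hFc.measurableSet) (fun b hb => ?_) fun b hb => ?_
    all_goals
      have hℓR := (hs b (hus hb)).2.two_zpow_neg_lt hn (hs b (hus hb)).1 hx₀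
    · exact (hF.2 (y b) (hyF b (hus hb)) ℓ hℓ (by linarith)).1.le
    · exact Set.inter_subset_inter_left _ (ball_subset_ball' (by linarith [(hy b (hus hb)).2]))
  calc (s.card : ENNReal) * ENNReal.ofReal (C⁻¹ * ℓ ^ m)
      ≤ (whitneyMultiplicity n * u.card : ℕ) * ENNReal.ofReal (C⁻¹ * ℓ ^ m) := by
        gcongr
        exact hcount
    _ ≤ _ := by
        rw [Nat.cast_mul, mul_assoc]
        gcongr

theorem card_le_of_isWhitneyCube {n : ℕ} {m C : ℝ} {F : Set (EuclideanSpace ℝ (Fin n))}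
    (hF : IsMSet m C F) (hFc : IsClosed F) (hn : n ≠ 0) {A : ℝ} (hA : 0 ≤ A)
    (hball : ∀ x ∈ F, ∀ r > 0, μH[m] (ball x r ∩ F) ≤ ENNReal.ofReal (A * r ^ m))
    {x₀ : EuclideanSpace ℝ (Fin n)} (hx₀ : x₀ ∈ F) {R : ℝ} (hR0 : 0 < R) (hR : R < diam F / 3)
    (k : ℤ) (s : Finset (Fin n → ℤ))
    (hs : ∀ a ∈ s, dyadicCube k a ⊆ ball x₀ R ∧ IsWhitneyCube F (dyadicCube k a)) :
    (s.card : ℝ) ≤ whitneyMultiplicity n * A * C * 5 ^ m * R ^ m * (2 : ℝ) ^ ((k : ℝ) * m) := by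
  have hC := hF.1
  have hcount := (card_mul_le_hausdorffMeasure_of_isWhitneyCube hF hFc hn hx₀ hR k s hs).trans
    (mul_le_mul_right (hball x₀ hx₀ (5 * R) (by positivity)) _)
  rw [← ENNReal.ofReal_natCast, ← ENNReal.ofReal_mul (by positivity), ← ENNReal.ofReal_natCast,
    ← ENNReal.ofReal_mul (by positivity), ENNReal.ofReal_le_ofReal_iff (by positivity)] at hcount
  have hscale : ((2 : ℝ) ^ (-k)) ^ m * (2 : ℝ) ^ ((k : ℝ) * m) = 1 := by
    rw [← Real.rpow_intCast, ← Real.rpow_mul two_pos.le, ← Real.rpow_add two_pos]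
    simp
  calc (s.card : ℝ)
      = s.card * (C⁻¹ * ((2 : ℝ) ^ (-k)) ^ m) * (C * (2 : ℝ) ^ ((k : ℝ) * m)) := by
        rw [mul_assoc, mul_mul_mul_comm, inv_mul_cancel₀ hC.ne', hscale, one_mul, mul_one]
    _ ≤ whitneyMultiplicity n * (A * (5 * R) ^ m) * (C * (2 : ℝ) ^ ((k : ℝ) * m)) := by gcongr
    _ = whitneyMultiplicity n * A * C * 5 ^ m * R ^ m * (2 : ℝ) ^ ((k : ℝ) * m) := by
        rw [Real.mul_rpow (by norm_num) hR0.le]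
        ring

theorem whitney_cube_count_general {n : ℕ} (m C : ℝ) (hm : 0 < m)
    (F : Set (EuclideanSpace ℝ (Fin n))) (hFc : IsCompact F)
    (hF : IsMSet m C F) :
    ∃ C' : ℝ, 0 < C' ∧ ∀ x₀ ∈ F, ∀ R : ℝ, 0 < R → R < Metric.diam F / 3 → ∀ k : ℤ,
      ((({a : Fin n → ℤ | dyadicCube k a ⊆ Metric.ball x₀ R ∧
          IsWhitneyCube F (dyadicCube k a)}).ncard : ℝ))
        ≤ C' * R ^ m * (2 : ℝ) ^ ((k : ℝ) * m) := by
  rcases le_or_gt (diam F) 0 with hd | hd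
  · exact ⟨1, one_pos, fun _ _ R hR hR3 _ => absurd hR3 (by linarith)⟩
  have hn : n ≠ 0 := by
    rintro rfl
    exact hd.ne' (diam_subsingleton Set.subsingleton_of_subsingleton)
  obtain ⟨A, hA, hball⟩ := hF.exists_hausdorffMeasure_ball_inter_le hFc hm.le hd
  have hC := hF.1
  have hK : 0 < whitneyMultiplicity n := pow_pos (Nat.succ_pos _) n
  refine ⟨whitneyMultiplicity n * A * C * 5 ^ m, by positivity, fun x₀ hx₀ R hR hR3 k => ?_⟩
  set S := {a : Fin n → ℤ | dyadicCube k a ⊆ ball x₀ R ∧ IsWhitneyCube F (dyadicCube k a)}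
  obtain hS | hS := S.finite_or_infinite
  · rw [Set.ncard_eq_toFinset_card _ hS]
    exact card_le_of_isWhitneyCube hF hFc.isClosed hn hA.le hball hx₀ hR hR3 k _
      fun a ha => hS.mem_toFinset.1 ha
  · -- `ncard` of an infinite set is `0`
    rw [hS.ncard, Nat.cast_zero]
    positivity

/-- If `F ⊂ ℝⁿ` is a compact nonempty m-set, then for `x₀ ∈ F` and `0 < R < diam F / 3`,
the number of Whitney cubes of generation `k` contained in `B(x₀, R)` is at most
`C' Rᵐ 2^{km}`, with `C'` depending only on `F` and `n`. -/
theorem whitney_cube_count {n : ℕ} (m C : ℝ) (hm : 0 < m) (hmn : m ≤ n)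
    (F : Set (EuclideanSpace ℝ (Fin n))) (hFc : IsCompact F) (hFne : F.Nonempty)
    (hF : IsMSet m C F) :
    ∃ C' : ℝ, 0 < C' ∧ ∀ x₀ ∈ F, ∀ R : ℝ, 0 < R → R < Metric.diam F / 3 → ∀ k : ℤ,
      ((({a : Fin n → ℤ | dyadicCube k a ⊆ Metric.ball x₀ R ∧
          IsWhitneyCube F (dyadicCube k a)}).ncard : ℝ))
        ≤ C' * R ^ m * (2 : ℝ) ^ ((k : ℝ) * m) :=
  whitney_cube_count_general m C hm F hFc hF
end
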